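/- Let 0 < ν ≤ 1, let a < b be real numbers, let q be a positive integer, and let Ω₀⁻¹ : [a,b] → ℝ^{q×q} be a function taking values in the positive definite q×q matrices whose entries are all uniformly ν-Hölder on [a,b]. Then for every ε > 0 there exists a positive integer N such that the set of parameter tuples ((μ_j)_{j=1}^{N}, σ², (Ω_j⁻¹)_{j=1}^{N}) ∈ ℝ^N × (0,∞) × (PD_q)^N satisfying ∫_a^b ‖Ω₀⁻¹(x) − Σ_{j=1}^{N} π_j(x) · Ω_j⁻¹‖_F dx < ε, where π_j(x) = exp(−(x−μ_j)²/(2σ²)) / Σ_{t=1}^{N} exp(−(x−μ_t)²/(2σ²)), is a nonempty open subset of ℝ^N × (0,∞) × (PD_q)^N; here PD_q is the set of positive definite q×q real symmetric matrices, viewed as an open subset of the space of symmetric q×q matrices. In particular, this set has positive Lebesgue measure. -/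

import Mathlib

open MeasureTheory

/-- Frobenius norm of a square real matrix. -/
noncomputable def frobNorm {q : ℕ} (A : Matrix (Fin q) (Fin q) ℝ) : ℝ :=
  Real.sqrt (∑ i, ∑ j, (A i j) ^ 2)

/-- The space of symmetric `q × q` real matrices (with the subspace topology). -/
def SymMat (q : ℕ) : Type := {A : Matrix (Fin q) (Fin q) ℝ // A.IsSymm}

instance (q : ℕ) : TopologicalSpace (SymMat q) :=
  instTopologicalSpaceSubtype

/-- The set of parameter tuples `((μ_j)_j, σ², (Ω_j⁻¹)_j)` lying in
`ℝ^N × (0,∞) × (PD_q)^N` for which the Gaussian-softmax mixture approximates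
`Ω₀⁻¹` within `ε` in the integrated Frobenius norm. -/
def goodParams (a b : ℝ) (q N : ℕ) (Ω : ℝ → Matrix (Fin q) (Fin q) ℝ) (ε : ℝ) :
    Set ((Fin N → ℝ) × ℝ × (Fin N → SymMat q)) :=
  {θ | 0 < θ.2.1 ∧ (∀ j, (θ.2.2 j).1.PosDef) ∧
    (∫ x in Set.Ioc a b,
      frobNorm (Ω x - ∑ j : Fin N,
        (Real.exp (-(x - θ.1 j) ^ 2 / (2 * θ.2.1)) /
          ∑ t : Fin N, Real.exp (-(x - θ.1 t) ^ 2 / (2 * θ.2.1))) • (θ.2.2 j).1))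
      < ε}

/-! Put `n + 1` equispaced centres `μ_j` in `[a, b]` with mesh `δ` well below a threshold `T`, and
take `Ω_j = Ω₀⁻¹(μ_j)`. Some centre lies within `δ` of any `x`, so every centre farther than `T`
from `x` gets softmax weight at most `exp (-(T² - δ²) / (2s))`, which is negligible for small `s`.
Hence `∑ π_j(x) |x - μ_j|^ν ≲ T^ν`, and the Hölder bound makes the integrated Frobenius error
small.

For openness, positive definiteness is an open condition (positivity of the quadratic form on
the compact unit sphere), and on `s > 0` the error is the integral over a compact interval of a
jointly continuous integrand, once `Ω₀⁻¹` is replaced by a continuous extension from `[a, b]`. -/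

open Set Filter Topology Matrix

instance {m n α : Type*} [TopologicalSpace α] [Finite m] [Finite n] [LocallyCompactSpace α] :
    LocallyCompactSpace (Matrix m n α) :=
  inferInstanceAs (LocallyCompactSpace (m → n → α))

instance {m n α : Type*} [TopologicalSpace α] [Countable m] [Countable n]
    [FirstCountableTopology α] : FirstCountableTopology (Matrix m n α) :=
  inferInstanceAs (FirstCountableTopology (m → n → α))

theorem continuous_frobNorm (q : ℕ) : Continuous (frobNorm (q := q)) := by
  unfold frobNorm; fun_prop

theorem isOpen_setOf_forall_dotProduct_mulVec_pos {n : Type*} [Fintype n] :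
    IsOpen {A : Matrix n n ℝ | ∀ x ≠ 0, 0 < x ⬝ᵥ A *ᵥ x} := by
  have hsphere : {A : Matrix n n ℝ | ∀ x ≠ 0, 0 < x ⬝ᵥ A *ᵥ x} =
      {A | ∀ x ∈ Metric.sphere (0 : n → ℝ) 1, 0 < x ⬝ᵥ A *ᵥ x} := by
    ext A
    refine ⟨fun h x hx => h x (ne_zero_of_mem_unit_sphere ⟨x, hx⟩), fun h x hx => ?_⟩
    have hx' : 0 < ‖x‖ := norm_pos_iff.2 hx
    have hu := h (‖x‖⁻¹ • x) (by simp [norm_smul, hx'.ne'])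
    rw [mulVec_smul, dotProduct_smul, smul_dotProduct, smul_smul, smul_eq_mul] at hu
    exact pos_of_mul_pos_right hu (by positivity)
  rw [hsphere, isOpen_iff_eventually]
  intro A₀ hA₀
  refine (isCompact_sphere 0 1).eventually_forall_of_forall_eventually fun y hy => ?_
  have hquad : Continuous fun p : Matrix n n ℝ × (n → ℝ) => p.2 ⬝ᵥ p.1 *ᵥ p.2 := by fun_prop
  exact continuous_const.continuousAt.eventually_lt hquad.continuousAt (hA₀ y hy)

theorem frobNorm_nonneg {q : ℕ} (A : Matrix (Fin q) (Fin q) ℝ) : 0 ≤ frobNorm A :=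
  Real.sqrt_nonneg _

theorem frobNorm_le_of_forall_abs_le {q : ℕ} {A : Matrix (Fin q) (Fin q) ℝ} {c : ℝ} (hc : 0 ≤ c)
    (h : ∀ i j, |A i j| ≤ c) : frobNorm A ≤ q * c := by
  rw [frobNorm, Real.sqrt_le_left (by positivity)]
  calc ∑ i, ∑ j, A i j ^ 2 ≤ ∑ _i : Fin q, ∑ _j : Fin q, c ^ 2 :=
        Finset.sum_le_sum fun i _ => Finset.sum_le_sum fun j _ =>
          sq_le_sq' (abs_le.1 (h i j)).1 (abs_le.1 (h i j)).2
    _ = (q * c) ^ 2 := by simp; ring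

theorem frobNorm_sub_sum_smul_le {ι : Type*} [Fintype ι] {q : ℕ} {A : Matrix (Fin q) (Fin q) ℝ}
    {M : ι → Matrix (Fin q) (Fin q) ℝ} {w c : ι → ℝ} (hw : ∀ j, 0 ≤ w j) (hw1 : ∑ j, w j = 1)
    (hc : ∀ j, 0 ≤ c j) (hA : ∀ j i k, |A i k - M j i k| ≤ c j) :
    frobNorm (A - ∑ j, w j • M j) ≤ q * ∑ j, w j * c j := by
  refine frobNorm_le_of_forall_abs_le (Finset.sum_nonneg fun j _ => mul_nonneg (hw j) (hc j))
    fun i k => ?_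
  have hentry : (A - ∑ j, w j • M j) i k = ∑ j, w j * (A i k - M j i k) := by
    simp only [Matrix.sub_apply, Matrix.sum_apply, Matrix.smul_apply, smul_eq_mul, mul_sub,
      Finset.sum_sub_distrib, ← Finset.sum_mul, hw1, one_mul]
  rw [hentry]
  refine (Finset.abs_sum_le_sum_abs _ _).trans (Finset.sum_le_sum fun j _ => ?_)
  rw [abs_mul, abs_of_nonneg (hw j)]
  exact mul_le_mul_of_nonneg_left (hA j i k) (hw j)

theorem isOpen_setOf_posDef (q : ℕ) : IsOpen {A : SymMat q | A.1.PosDef} := by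
  have : {A : SymMat q | A.1.PosDef} = Subtype.val ⁻¹' {A | ∀ x ≠ 0, 0 < x ⬝ᵥ A *ᵥ x} := by
    ext A
    exact ⟨fun h x hx => by simpa using h.dotProduct_mulVec_pos hx,
      fun h => .of_dotProduct_mulVec_pos (isHermitian_iff_isSymm.2 A.2) fun x hx => by
        simpa using h x hx⟩
  rw [this]
  exact isOpen_setOf_forall_dotProduct_mulVec_pos.preimage continuous_subtype_val

section GaussSoftmax

variable {ι : Type*} [Fintype ι]

noncomputable def gaussSoftmax (μ : ι → ℝ) (s x : ℝ) (j : ι) : ℝ :=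
  Real.exp (-(x - μ j) ^ 2 / (2 * s)) / ∑ t, Real.exp (-(x - μ t) ^ 2 / (2 * s))

theorem gaussSoftmax_nonneg (μ : ι → ℝ) (s x : ℝ) (j : ι) : 0 ≤ gaussSoftmax μ s x j := by
  unfold gaussSoftmax; positivity

theorem sum_gaussSoftmax [Nonempty ι] (μ : ι → ℝ) (s x : ℝ) : ∑ j, gaussSoftmax μ s x j = 1 := by
  simp only [gaussSoftmax, ← Finset.sum_div]
  exact div_self (by positivity)

theorem gaussSoftmax_le_exp (μ : ι → ℝ) (s x : ℝ) (j j₀ : ι) :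
    gaussSoftmax μ s x j ≤ Real.exp (((x - μ j₀) ^ 2 - (x - μ j) ^ 2) / (2 * s)) := by
  calc gaussSoftmax μ s x j
      ≤ Real.exp (-(x - μ j) ^ 2 / (2 * s)) / Real.exp (-(x - μ j₀) ^ 2 / (2 * s)) :=
        div_le_div_of_nonneg_left (by positivity) (by positivity)
          (Finset.single_le_sum (f := fun t => Real.exp (-(x - μ t) ^ 2 / (2 * s)))
            (fun t _ => (Real.exp_pos _).le) (Finset.mem_univ j₀))
    _ = _ := by rw [← Real.exp_sub]; ring_nf

theorem ContinuousAt.gaussSoftmax [Nonempty ι] {X : Type*} [TopologicalSpace X] {μ : X → ι → ℝ}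
    {s x : X → ℝ} {p : X} (hμ : ContinuousAt μ p) (hs : ContinuousAt s p) (hx : ContinuousAt x p)
    (hs0 : s p ≠ 0) (j : ι) : ContinuousAt (fun p => gaussSoftmax (μ p) (s p) (x p) j) p := by
  unfold _root_.gaussSoftmax
  have h2s : 2 * s p ≠ 0 := by positivity
  have hμ' (t : ι) : ContinuousAt (fun p => μ p t) p := (continuous_apply t).continuousAt.comp hμ
  fun_prop (disch := first | exact h2s | positivity)

end GaussSoftmax

noncomputable def equispaced (a b : ℝ) (n : ℕ) (j : Fin (n + 1)) : ℝ := a + j * ((b - a) / n)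

theorem equispaced_mem_Icc {a b : ℝ} (hab : a ≤ b) (n : ℕ) (j : Fin (n + 1)) :
    equispaced a b n j ∈ Icc a b := by
  have hj : (j : ℝ) / n ≤ 1 :=
    div_le_one_of_le₀ (by exact_mod_cast Nat.lt_succ_iff.1 j.2) (by positivity)
  have hba : 0 ≤ b - a := sub_nonneg.2 hab
  have hj0 : 0 ≤ (j : ℝ) / n := by positivity
  rw [equispaced, show (j : ℝ) * ((b - a) / n) = (j / n) * (b - a) by ring]
  constructor <;> nlinarith

theorem exists_abs_sub_equispaced_le {a b : ℝ} (hab : a < b) {n : ℕ} (hn : 0 < n) {x : ℝ}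
    (hx : x ∈ Icc a b) : ∃ j, |x - equispaced a b n j| ≤ (b - a) / n := by
  set δ := (b - a) / n
  have hδ : 0 < δ := by positivity
  set t := (x - a) / δ
  have ht : 0 ≤ t := div_nonneg (sub_nonneg.2 hx.1) hδ.le
  have htn : ⌊t⌋₊ < n + 1 := by
    refine Nat.lt_succ_of_le (Nat.floor_le_of_le ?_)
    rw [div_le_iff₀ hδ, mul_div_cancel₀ _ (by positivity)]
    linarith [hx.2]
  refine ⟨⟨⌊t⌋₊, htn⟩, ?_⟩
  have hxt : x - a = t * δ := by rw [div_mul_cancel₀ _ hδ.ne']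
  rw [equispaced, abs_le]
  constructor <;> nlinarith [Nat.floor_le ht, Nat.lt_floor_add_one t]

theorem sum_mul_rpow_le {ι : Type*} [Fintype ι] {w d : ι → ℝ} {T D E ν : ℝ}
    (hw : ∀ j, 0 ≤ w j) (hw1 : ∑ j, w j = 1) (hd : ∀ j, 0 ≤ d j) (hdD : ∀ j, d j ≤ D)
    (hfar : ∀ j, T < d j → w j ≤ E) (hT : 0 ≤ T) (hE : 0 ≤ E) (hν : 0 ≤ ν) :
    ∑ j, w j * d j ^ ν ≤ T ^ ν + Fintype.card ι * (E * D ^ ν) := by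
  have hterm : ∀ j, w j * d j ^ ν ≤ w j * T ^ ν + E * D ^ ν := by
    intro j
    rcases le_or_gt (d j) T with hnear | hfar'
    · have := mul_le_mul_of_nonneg_left (Real.rpow_le_rpow (hd j) hnear hν) (hw j)
      have : 0 ≤ E * D ^ ν := mul_nonneg hE (Real.rpow_nonneg ((hd j).trans (hdD j)) ν)
      linarith
    · have := mul_le_mul (hfar j hfar') (Real.rpow_le_rpow (hd j) (hdD j) hν)
        (Real.rpow_nonneg (hd j) ν) hE
      have : 0 ≤ w j * T ^ ν := mul_nonneg (hw j) (Real.rpow_nonneg hT ν)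
      linarith
  calc ∑ j, w j * d j ^ ν ≤ ∑ j, (w j * T ^ ν + E * D ^ ν) := Finset.sum_le_sum fun j _ => hterm j
    _ = T ^ ν + Fintype.card ι * (E * D ^ ν) := by
      rw [Finset.sum_add_distrib, ← Finset.sum_mul, hw1, one_mul, Finset.sum_const, nsmul_eq_mul,
        Finset.card_univ]

theorem exists_pos_exp_neg_div_lt {c E : ℝ} (hc : 0 < c) (hE : 0 < E) :
    ∃ s > 0, Real.exp (-c / (2 * s)) < E := by
  refine ⟨c / (2 * (|Real.log E| + 1)), by positivity, ?_⟩
  calc Real.exp (-c / (2 * (c / (2 * (|Real.log E| + 1)))))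
      = Real.exp (-(|Real.log E| + 1)) := by congr 1; field_simp
    _ < Real.exp (Real.log E) := Real.exp_lt_exp.2 (by linarith [neg_abs_le (Real.log E)])
    _ = E := Real.exp_log hE

theorem exists_gaussSoftmax_moment_le {a b ν η : ℝ} (hab : a < b) (hν : 0 < ν) (hη : 0 < η) :
    ∃ n : ℕ, ∃ s > 0, ∀ x ∈ Icc a b,
      ∑ j, gaussSoftmax (equispaced a b n) s x j * |x - equispaced a b n j| ^ ν ≤ η := by
  have hba : 0 < b - a := sub_pos.2 hab
  set T := (η / 2) ^ ν⁻¹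
  have hT : 0 < T := by positivity
  have hTν : T ^ ν = η / 2 := Real.rpow_inv_rpow (by positivity) hν.ne'
  obtain ⟨n, hn⟩ := exists_nat_gt (2 * (b - a) / T)
  have hn0 : (0 : ℝ) < n := lt_trans (by positivity) hn
  set δ := (b - a) / n
  have hδT : δ < T / 2 := by
    rw [div_lt_iff₀ hn0]
    rw [div_lt_iff₀ hT] at hn
    linarith
  set E := η / (2 * ((n + 1) * (b - a) ^ ν))
  obtain ⟨s, hs, hsE⟩ := exists_pos_exp_neg_div_lt (c := T ^ 2 - δ ^ 2) (E := E)
    (by nlinarith [div_pos hba hn0]) (by positivity)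
  refine ⟨n, s, hs, fun x hx => ?_⟩
  set μ := equispaced a b n
  have hμ : ∀ j, μ j ∈ Icc a b := equispaced_mem_Icc hab.le n
  obtain ⟨j₀, hj₀⟩ := exists_abs_sub_equispaced_le hab (by exact_mod_cast hn0) hx
  have hfar : ∀ j, T < |x - μ j| → gaussSoftmax μ s x j ≤ E := by
    intro j hj
    refine (gaussSoftmax_le_exp μ s x j j₀).trans (le_trans ?_ hsE.le)
    gcongr
    nlinarith [sq_abs (x - μ j₀), sq_abs (x - μ j), abs_nonneg (x - μ j₀)]
  calc ∑ j, gaussSoftmax μ s x j * |x - μ j| ^ ν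
      ≤ T ^ ν + Fintype.card (Fin (n + 1)) * (E * (b - a) ^ ν) :=
        sum_mul_rpow_le (fun j => gaussSoftmax_nonneg μ s x j) (sum_gaussSoftmax μ s x)
          (fun j => abs_nonneg _)
          (fun j => abs_sub_le_of_le_of_le hx.1 hx.2 (hμ j).1 (hμ j).2)
          hfar hT.le (by positivity) hν.le
    _ = η := by
      have hE : ((n : ℝ) + 1) * (E * (b - a) ^ ν) = η / 2 := by
        simp only [E]
        field_simp
      rw [hTν, Fintype.card_fin, Nat.cast_succ, hE]
      ring

theorem goodParams_nonempty {ν a b H ε : ℝ} {q : ℕ} {Ω : ℝ → Matrix (Fin q) (Fin q) ℝ}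
    (hν : 0 < ν) (hab : a < b) (hH : 0 ≤ H) (hε : 0 < ε)
    (hpd : ∀ x ∈ Icc a b, (Ω x).PosDef)
    (hhold : ∀ i j, ∀ x ∈ Icc a b, ∀ x' ∈ Icc a b, |Ω x i j - Ω x' i j| ≤ H * |x - x'| ^ ν) :
    ∃ N, 0 < N ∧ (goodParams a b q N Ω ε).Nonempty := by
  have hba : 0 < b - a := sub_pos.2 hab
  set η := ε / ((q * H + 1) * (b - a))
  obtain ⟨n, s, hs, hmom⟩ := exists_gaussSoftmax_moment_le hab hν (η := η) (by positivity)
  set μ := equispaced a b n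
  have hμ : ∀ j, μ j ∈ Icc a b := equispaced_mem_Icc hab.le n
  refine ⟨n + 1, n.succ_pos,
    ⟨μ, s, fun j => ⟨Ω (μ j), isHermitian_iff_isSymm.1 (hpd _ (hμ j)).isHermitian⟩⟩,
    hs, fun j => hpd _ (hμ j), ?_⟩
  have hpt : ∀ x ∈ Ioc a b,
      ‖frobNorm (Ω x - ∑ j, gaussSoftmax μ s x j • Ω (μ j))‖ ≤ q * H * η := by
    intro x hx
    have hx' := Ioc_subset_Icc_self hx
    rw [Real.norm_of_nonneg (frobNorm_nonneg _), mul_assoc]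
    refine (frobNorm_sub_sum_smul_le (c := fun j => H * |x - μ j| ^ ν)
      (fun j => gaussSoftmax_nonneg μ s x j) (sum_gaussSoftmax μ s x) (fun j => by positivity)
      fun j i k => hhold i k x hx' (μ j) (hμ j)).trans ?_
    gcongr
    simpa only [mul_left_comm _ H, ← Finset.mul_sum] using
      mul_le_mul_of_nonneg_left (hmom x hx') hH
  calc _ ≤ ‖∫ x in Ioc a b, frobNorm (Ω x - ∑ j, gaussSoftmax μ s x j • Ω (μ j))‖ :=
        Real.le_norm_self _
    _ ≤ q * H * η * (b - a) := by
        simpa only [Real.volume_real_Ioc_of_le hab.le] using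
          norm_setIntegral_le_of_norm_le_const (measure_Ioc_lt_top (μ := volume)) hpt
    _ < (q * H + 1) * η * (b - a) := by gcongr; linarith
    _ = ε := by simp only [η]; field_simp

theorem continuousOn_setIntegral_of_continuousOn_prod {X Y E : Type*} [TopologicalSpace X]
    [FirstCountableTopology X] [LocallyCompactSpace X] [TopologicalSpace Y] [MeasurableSpace Y]
    [OpensMeasurableSpace Y] [NormedAddCommGroup E] [NormedSpace ℝ E]
    [SecondCountableTopologyEither Y E] {μ : Measure Y} [IsLocallyFiniteMeasure μ]
    {f : X × Y → E} {U : Set X} (hU : IsOpen U) (hf : ContinuousOn f (U ×ˢ univ))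
    {s : Set Y} (hs : IsCompact s) : ContinuousOn (fun x => ∫ y in s, f (x, y) ∂μ) U := by
  have := hU.locallyCompactSpace
  rw [continuousOn_iff_continuous_domRestrict]
  exact continuous_parametric_integral_of_continuous (f := fun (x : U) y => f (x, y))
    (hf.comp_continuous (f := fun p : U × Y => ((p.1 : X), p.2)) (by fun_prop)
      fun p => ⟨p.1.2, trivial⟩) hs

theorem ContinuousOn.exists_continuous_eqOn_Icc {α β : Type*} [LinearOrder α] [TopologicalSpace α]
    [OrderTopology α] [TopologicalSpace β] {a b : α} (hab : a ≤ b) {f : α → β}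
    (hf : ContinuousOn f (Icc a b)) : ∃ g, Continuous g ∧ EqOn g f (Icc a b) :=
  ⟨IccExtend hab ((Icc a b).domRestrict f),
    (continuousOn_iff_continuous_domRestrict.1 hf).Icc_extend',
    fun _ hx => IccExtend_of_mem hab _ hx⟩

theorem goodParams_congr {a b ε : ℝ} {q N : ℕ} {Ω Ω' : ℝ → Matrix (Fin q) (Fin q) ℝ}
    (h : EqOn Ω Ω' (Ioc a b)) : goodParams a b q N Ω ε = goodParams a b q N Ω' ε := by
  ext θ
  simp only [goodParams, mem_ofPred_eq]
  rw [setIntegral_congr_fun measurableSet_Ioc fun x hx => by rw [h hx]]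

theorem continuousOn_frobNorm_sub_sum_gaussSoftmax_smul {ι : Type*} [Fintype ι] [Nonempty ι]
    {q : ℕ} {Ω : ℝ → Matrix (Fin q) (Fin q) ℝ} (hΩ : Continuous Ω) :
    ContinuousOn (fun p : ((ι → ℝ) × ℝ × (ι → Matrix (Fin q) (Fin q) ℝ)) × ℝ =>
        frobNorm (Ω p.2 - ∑ j, gaussSoftmax p.1.1 p.1.2.1 p.2 j • p.1.2.2 j))
      ({θ | 0 < θ.2.1} ×ˢ univ) := by
  rintro p ⟨hs, -⟩
  refine ContinuousAt.continuousWithinAt ?_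
  have hw (j : ι) := ContinuousAt.gaussSoftmax (p := p) (μ := fun p => p.1.1)
    (s := fun p => p.1.2.1) (x := Prod.snd) (by fun_prop) (by fun_prop) (by fun_prop) hs.ne' j
  exact (continuous_frobNorm q).continuousAt.comp ((hΩ.comp continuous_snd).continuousAt.sub
    (tendsto_finsetSum _ fun j _ => (hw j).smul (by fun_prop)))

theorem isOpen_goodParams {a b ε : ℝ} {q N : ℕ} (hN : 0 < N) {Ω : ℝ → Matrix (Fin q) (Fin q) ℝ}
    (hΩ : Continuous Ω) : IsOpen (goodParams a b q N Ω ε) := by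
  have : Nonempty (Fin N) := ⟨⟨0, hN⟩⟩
  let I : (Fin N → ℝ) × ℝ × (Fin N → SymMat q) → ℝ := fun θ =>
    ∫ x in Icc a b, frobNorm (Ω x - ∑ j, gaussSoftmax θ.1 θ.2.1 x j • (θ.2.2 j).1)
  have hI : ContinuousOn I {θ | 0 < θ.2.1} := by
    have hU : IsOpen {θ : (Fin N → ℝ) × ℝ × (Fin N → Matrix (Fin q) (Fin q) ℝ) | 0 < θ.2.1} :=
      isOpen_lt continuous_const (by fun_prop)
    have hJ := continuousOn_setIntegral_of_continuousOn_prod (μ := volume) hU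
      (continuousOn_frobNorm_sub_sum_gaussSoftmax_smul hΩ) (isCompact_Icc (a := a) (b := b))
    have hΨ : Continuous fun θ : (Fin N → ℝ) × ℝ × (Fin N → SymMat q) =>
        (θ.1, θ.2.1, fun j => (θ.2.2 j).1) := by
      fun_prop
    simpa only [I, Function.comp_def] using
      hJ.comp (s := {θ : (Fin N → ℝ) × ℝ × (Fin N → SymMat q) | 0 < θ.2.1}) hΨ.continuousOn
        fun _ h => h
  have hPD : IsOpen {θ : (Fin N → ℝ) × ℝ × (Fin N → SymMat q) | ∀ j, (θ.2.2 j).1.PosDef} := by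
    simp only [ofPred_forall]
    exact isOpen_iInter_of_finite fun j => (isOpen_setOf_posDef q).preimage (by fun_prop)
  have hgood : goodParams a b q N Ω ε =
      ({θ | 0 < θ.2.1} ∩ I ⁻¹' Iio ε) ∩ {θ | ∀ j, (θ.2.2 j).1.PosDef} := by
    ext θ
    simp only [goodParams, I, gaussSoftmax, integral_Icc_eq_integral_Ioc, mem_ofPred_eq,
      mem_inter_iff, mem_preimage, mem_Iio]
    tauto
  rw [hgood]
  exact (hI.isOpen_inter_preimage (isOpen_lt continuous_const (by fun_prop)) isOpen_Iio).inter hPD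

theorem continuousOn_of_abs_sub_le_mul_rpow {g : ℝ → ℝ} {s : Set ℝ} {H ν : ℝ} (hν : 0 < ν)
    (hg : ∀ x ∈ s, ∀ y ∈ s, |g x - g y| ≤ H * |x - y| ^ ν) : ContinuousOn g s := by
  intro x hx
  have hlim : Tendsto (fun y => H * |y - x| ^ ν) (𝓝[s] x) (𝓝 0) := by
    have : Continuous fun y => H * |y - x| ^ ν := by fun_prop (disch := exact hν.le)
    simpa [Real.zero_rpow hν.ne'] using (this.tendsto x).mono_left nhdsWithin_le_nhds
  rw [ContinuousWithinAt, tendsto_iff_dist_tendsto_zero]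
  exact squeeze_zero' (Eventually.of_forall fun y => dist_nonneg)
    (eventually_nhdsWithin_of_forall fun y hy => hg y hy x hx) hlim

theorem exists_nonneg_holder_coeff {ι : Type*} [Finite ι] {f : ι → ℝ → ℝ} {s : Set ℝ} {ν : ℝ}
    (hf : ∀ i, ∃ H : ℝ, ∀ x ∈ s, ∀ x' ∈ s, |f i x - f i x'| ≤ H * |x - x'| ^ ν) :
    ∃ H, 0 ≤ H ∧ ∀ i, ∀ x ∈ s, ∀ x' ∈ s, |f i x - f i x'| ≤ H * |x - x'| ^ ν := by
  choose Hf hHf using hf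
  obtain ⟨H, hH⟩ := Finite.exists_le Hf
  exact ⟨max H 0, le_max_right _ _, fun i x hx x' hx' => (hHf i x hx x' hx').trans
    (mul_le_mul_of_nonneg_right ((hH i).trans (le_max_left _ _)) (by positivity))⟩

theorem stmt4_general (ν : ℝ) (hν0 : 0 < ν) (a b : ℝ) (hab : a < b)
    (q : ℕ) (Ω : ℝ → Matrix (Fin q) (Fin q) ℝ)
    (hpd : ∀ x ∈ Set.Icc a b, (Ω x).PosDef)
    (hhold : ∀ i j : Fin q, ∃ H : ℝ, ∀ x ∈ Set.Icc a b, ∀ x' ∈ Set.Icc a b,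
      |Ω x i j - Ω x' i j| ≤ H * |x - x'| ^ ν) :
    ∀ ε > 0, ∃ N : ℕ, 0 < N ∧
      IsOpen (goodParams a b q N Ω ε) ∧ (goodParams a b q N Ω ε).Nonempty := by
  intro ε hε
  obtain ⟨H, hH, hholdH⟩ := exists_nonneg_holder_coeff (f := fun p : Fin q × Fin q => (Ω · p.1 p.2))
    fun p => hhold p.1 p.2
  have hΩ : ContinuousOn Ω (Icc a b) := continuousOn_pi.2 fun i => continuousOn_pi.2 fun j =>
    continuousOn_of_abs_sub_le_mul_rpow hν0 (hholdH (i, j))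
  obtain ⟨Ω', hΩ', hΩΩ'⟩ := hΩ.exists_continuous_eqOn_Icc hab.le
  obtain ⟨N, hN, hne⟩ := goodParams_nonempty hν0 hab hH hε hpd fun i j => hholdH (i, j)
  refine ⟨N, hN, ?_, hne⟩
  rw [goodParams_congr (hΩΩ'.symm.mono Ioc_subset_Icc_self)]
  exact isOpen_goodParams hN hΩ'

theorem stmt4 (ν : ℝ) (hν0 : 0 < ν) (hν1 : ν ≤ 1) (a b : ℝ) (hab : a < b)
    (q : ℕ) (hq : 0 < q) (Ω : ℝ → Matrix (Fin q) (Fin q) ℝ)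
    (hpd : ∀ x ∈ Set.Icc a b, (Ω x).PosDef)
    (hhold : ∀ i j : Fin q, ∃ H : ℝ, ∀ x ∈ Set.Icc a b, ∀ x' ∈ Set.Icc a b,
      |Ω x i j - Ω x' i j| ≤ H * |x - x'| ^ ν) :
    ∀ ε > 0, ∃ N : ℕ, 0 < N ∧
      IsOpen (goodParams a b q N Ω ε) ∧ (goodParams a b q N Ω ε).Nonempty :=
  stmt4_general ν hν0 a b hab q Ω hpd hhold
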